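/- arXiv:math/0407217 — 4 statements merged into one kernel-verified Lean document; each statement's English description precedes it below -/
import Mathlib

section
/- Let C be a monoidal category equipped with two braidings c and c'. Then the mixed double D_{X,Y} = c'_{Y,X} ∘ c_{X,Y} is a twine of C, i.e., it satisfies: (DB0) D_{I,I} = id; (DB1) (D_{X,Y} ⊗ id_Z) ∘ D_{X⊗Y,Z} = (id_X ⊗ D_{Y,Z}) ∘ D_{X,Y⊗Z}; and (DB2) (D_{X⊗Y,Z} ⊗ id_T)(id_X ⊗ D_{Y,Z}^{-1} ⊗ id_T)(id_X ⊗ D_{Y,Z⊗T}) = (id_X ⊗ D_{Y,Z⊗T})(id_X ⊗ D_{Y,Z}^{-1} ⊗ id_T)(D_{X⊗Y,Z} ⊗ id_T). -/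
/-!
Moving `c'` across `D` by naturality turns both sides of (DB1) into a half twist of `c` on
`X ⊗ Y ⊗ Z` followed by a half twist of `c'` on `Z ⊗ Y ⊗ X`; the two half twists built from one
braiding (`β_{X⊗Y,Z}` then `β_{X,Y}`, or `β_{X,Y⊗Z}` then `β_{Y,Z}`) agree by Yang–Baxter.

For (DB2), the hexagon axioms show that `D_{X⊗Y,Z} ⊗ T` and `X ⊗ D_{Y,Z⊗T}` are conjugate, by one
and the same pair of isomorphisms built from `c_{Y,Z}` and `c'_{Z,Y}`, to `D_{X,Z} ⊗ Y ⊗ T` and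
`X ⊗ Z ⊗ D_{Y,T}`, and the middle factor of (DB2) is the inverse of that conjugation. The two
conjugated morphisms act on disjoint tensor factors, hence commute.
-/

open CategoryTheory MonoidalCategory

/-- The mixed double `D_{X,Y} = c'_{Y,X} ∘ c_{X,Y}` of two braidings `c`, `c'`. -/
def mixedDouble {C : Type*} [Category C] [MonoidalCategory C]
    (c c' : BraidedCategory C) (X Y : C) : X ⊗ Y ≅ X ⊗ Y :=
  c.braiding X Y ≪≫ c'.braiding Y X

namespace CategoryTheory.MonoidalCategory

variable {C : Type*} [Category C] [MonoidalCategory C]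

@[simps!]
def whiskerMiddleIso {Y Z : C} (e : Y ⊗ Z ≅ Z ⊗ Y) (X T : C) :
    ((X ⊗ Y) ⊗ Z) ⊗ T ≅ (X ⊗ Z) ⊗ (Y ⊗ T) :=
  whiskerRightIso (α_ X Y Z) T ≪≫ α_ X (Y ⊗ Z) T ≪≫
    whiskerLeftIso X (whiskerRightIso e T ≪≫ α_ Z Y T) ≪≫ (α_ X Z (Y ⊗ T)).symm

end CategoryTheory.MonoidalCategory

namespace CategoryTheory.BraidedCategory

variable {C : Type*} [Category C] [MonoidalCategory C] [BraidedCategory C]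

theorem braiding_tensor_left_comp_whiskerLeft (X Y Z : C) :
    (β_ (X ⊗ Y) Z).hom ≫ Z ◁ (β_ X Y).hom =
      (α_ X Y Z).hom ≫ (β_ X (Y ⊗ Z)).hom ≫ (β_ Y Z).hom ▷ X ≫ (α_ Z Y X).hom := by
  rw [braiding_tensor_left_hom, braiding_tensor_right_hom]
  simp only [Category.assoc, ← yang_baxter, Iso.hom_inv_id_assoc]

theorem whiskerLeft_comp_braiding_tensor_right (X Y Z : C) :
    (α_ Z Y X).hom ≫ Z ◁ (β_ Y X).hom ≫ (β_ Z (X ⊗ Y)).hom =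
      (β_ Z Y).hom ▷ X ≫ (β_ (Y ⊗ Z) X).hom ≫ (α_ X Y Z).inv := by
  rw [braiding_naturality_right, braiding_naturality_left_assoc,
    reassoc_of% braiding_tensor_left_comp_whiskerLeft]
  simp

theorem braiding_tensorUnit_tensorUnit : (β_ (𝟙_ C) (𝟙_ C)).hom = 𝟙 _ := by
  rw [braiding_tensorUnit_left, unitors_equal, Iso.hom_inv_id]

end CategoryTheory.BraidedCategory

section MixedDouble

open BraidedCategory

variable {C : Type*} [Category C] [MonoidalCategory C] (c c' : BraidedCategory C)

@[simp]
theorem mixedDouble_hom (X Y : C) :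
    (mixedDouble c c' X Y).hom = (c.braiding X Y).hom ≫ (c'.braiding Y X).hom := rfl

theorem mixedDouble_tensorUnit : (mixedDouble c c' (𝟙_ C) (𝟙_ C)).hom = 𝟙 _ := by
  rw [mixedDouble_hom, @braiding_tensorUnit_tensorUnit _ _ _ c,
    @braiding_tensorUnit_tensorUnit _ _ _ c', Category.comp_id]

theorem mixedDouble_tensor_left_hom (X Y Z : C) :
    (mixedDouble c c' (X ⊗ Y) Z).hom =
      (α_ X Y Z).hom ≫ X ◁ (c.braiding Y Z).hom ≫ (α_ X Z Y).inv ≫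
        (mixedDouble c c' X Z).hom ▷ Y ≫ (α_ X Z Y).hom ≫
        X ◁ (c'.braiding Z Y).hom ≫ (α_ X Y Z).inv := by
  simp only [mixedDouble_hom, @braiding_tensor_left_hom _ _ _ c,
    @braiding_tensor_right_hom _ _ _ c', Category.assoc, Iso.hom_inv_id_assoc, comp_whiskerRight]

theorem mixedDouble_tensor_right_hom (X Y Z : C) :
    (mixedDouble c c' X (Y ⊗ Z)).hom =
      (α_ X Y Z).inv ≫ (c.braiding X Y).hom ▷ Z ≫ (α_ Y X Z).hom ≫
        Y ◁ (mixedDouble c c' X Z).hom ≫ (α_ Y X Z).inv ≫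
        (c'.braiding Y X).hom ▷ Z ≫ (α_ X Y Z).hom := by
  simp only [mixedDouble_hom, @braiding_tensor_right_hom _ _ _ c,
    @braiding_tensor_left_hom _ _ _ c', Category.assoc, Iso.inv_hom_id_assoc,
    MonoidalCategory.whiskerLeft_comp]

theorem mixedDouble_tensor_left_hom_comp_whiskerRight (X Y Z : C) :
    (mixedDouble c c' (X ⊗ Y) Z).hom ≫ (mixedDouble c c' X Y).hom ▷ Z =
      (α_ X Y Z).hom ≫ (mixedDouble c c' X (Y ⊗ Z)).hom ≫
        X ◁ (mixedDouble c c' Y Z).hom ≫ (α_ X Y Z).inv :=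
  calc _ = (c.braiding (X ⊗ Y) Z).hom ≫ Z ◁ (c.braiding X Y).hom ≫
        Z ◁ (c'.braiding Y X).hom ≫ (c'.braiding Z (X ⊗ Y)).hom := by
        rw [mixedDouble_hom, mixedDouble_hom, Category.assoc, ← c'.braiding_naturality_right,
          MonoidalCategory.whiskerLeft_comp, Category.assoc]
    _ = (α_ X Y Z).hom ≫ (c.braiding X (Y ⊗ Z)).hom ≫ (c.braiding Y Z).hom ▷ X ≫
        (α_ Z Y X).hom ≫ Z ◁ (c'.braiding Y X).hom ≫ (c'.braiding Z (X ⊗ Y)).hom := by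
        rw [reassoc_of% @braiding_tensor_left_comp_whiskerLeft _ _ _ c]
    _ = (α_ X Y Z).hom ≫ (c.braiding X (Y ⊗ Z)).hom ≫ (c.braiding Y Z).hom ▷ X ≫
        (c'.braiding Z Y).hom ▷ X ≫ (c'.braiding (Y ⊗ Z) X).hom ≫ (α_ X Y Z).inv := by
        rw [@whiskerLeft_comp_braiding_tensor_right _ _ _ c']
    _ = _ := by
        simp only [mixedDouble_hom, MonoidalCategory.whiskerLeft_comp, Category.assoc,
          @braiding_naturality_left_assoc _ _ _ c']

theorem mixedDouble_tensor_left_whiskerRight_eq_conj (X Y Z T : C) :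
    (mixedDouble c c' (X ⊗ Y) Z).hom ▷ T =
      (whiskerMiddleIso (c.braiding Y Z) X T).hom ≫ (mixedDouble c c' X Z).hom ▷ (Y ⊗ T) ≫
        (whiskerMiddleIso (c'.braiding Z Y).symm X T).inv := by
  simp only [mixedDouble_tensor_left_hom, whiskerMiddleIso_hom, whiskerMiddleIso_inv,
    Iso.symm_inv]
  monoidal

theorem mixedDouble_tensor_right_whiskerLeft_eq_conj (X Y Z T : C) :
    (α_ (X ⊗ Y) Z T).hom ≫ (α_ X Y (Z ⊗ T)).hom ≫ X ◁ (mixedDouble c c' Y (Z ⊗ T)).hom ≫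
        (α_ X Y (Z ⊗ T)).inv ≫ (α_ (X ⊗ Y) Z T).inv =
      (whiskerMiddleIso (c.braiding Y Z) X T).hom ≫ (X ⊗ Z) ◁ (mixedDouble c c' Y T).hom ≫
        (whiskerMiddleIso (c'.braiding Z Y).symm X T).inv := by
  simp only [mixedDouble_tensor_right_hom, whiskerMiddleIso_hom, whiskerMiddleIso_inv,
    Iso.symm_inv]
  monoidal

theorem mixedDouble_inv_whiskerLeft_eq_conj (X Y Z T : C) :
    (α_ X Y Z).hom ▷ T ≫ (X ◁ (mixedDouble c c' Y Z).inv) ▷ T ≫ (α_ X Y Z).inv ▷ T =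
      (whiskerMiddleIso (c'.braiding Z Y).symm X T).hom ≫
        (whiskerMiddleIso (c.braiding Y Z) X T).inv := by
  simp only [mixedDouble, Iso.trans_inv, whiskerMiddleIso_hom, whiskerMiddleIso_inv,
    Iso.symm_hom]
  monoidal

end MixedDouble

/-- If `c` and `c'` are two braidings on a monoidal category `C`,
then the mixed double `D_{X,Y} = c'_{Y,X} ∘ c_{X,Y}` is a twine: it satisfies
(DB0) `D_{I,I} = id`, (DB1) the fusion axiom, and (DB2) the four-object
commutation axiom (associators inserted in the non-strict setting). -/
theorem mixedDouble_isTwine {C : Type*} [Category C] [MonoidalCategory C]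
    (c c' : BraidedCategory C) :
    -- (DB0)
    ((mixedDouble c c' (𝟙_ C) (𝟙_ C)).hom = 𝟙 (𝟙_ C ⊗ 𝟙_ C)) ∧
    -- (DB1)
    (∀ X Y Z : C,
      (mixedDouble c c' (X ⊗ Y) Z).hom ≫ ((mixedDouble c c' X Y).hom ⊗ₘ 𝟙 Z) =
        (α_ X Y Z).hom ≫ (mixedDouble c c' X (Y ⊗ Z)).hom ≫
          (𝟙 X ⊗ₘ (mixedDouble c c' Y Z).hom) ≫ (α_ X Y Z).inv) ∧
    -- (DB2)
    (∀ X Y Z T : C,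
      letI a₁ : ((X ⊗ Y) ⊗ Z) ⊗ T ⟶ ((X ⊗ Y) ⊗ Z) ⊗ T :=
        (mixedDouble c c' (X ⊗ Y) Z).hom ⊗ₘ 𝟙 T
      letI a₂ : ((X ⊗ Y) ⊗ Z) ⊗ T ⟶ ((X ⊗ Y) ⊗ Z) ⊗ T :=
        ((α_ X Y Z).hom ⊗ₘ 𝟙 T) ≫ ((𝟙 X ⊗ₘ (mixedDouble c c' Y Z).inv) ⊗ₘ 𝟙 T) ≫
          ((α_ X Y Z).inv ⊗ₘ 𝟙 T)
      letI a₃ : ((X ⊗ Y) ⊗ Z) ⊗ T ⟶ ((X ⊗ Y) ⊗ Z) ⊗ T :=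
        (α_ (X ⊗ Y) Z T).hom ≫ (α_ X Y (Z ⊗ T)).hom ≫
          (𝟙 X ⊗ₘ (mixedDouble c c' Y (Z ⊗ T)).hom) ≫
          (α_ X Y (Z ⊗ T)).inv ≫ (α_ (X ⊗ Y) Z T).inv
      a₃ ≫ a₂ ≫ a₁ = a₁ ≫ a₂ ≫ a₃) := by
  simp only [tensorHom_id, id_tensorHom]
  refine ⟨mixedDouble_tensorUnit c c', mixedDouble_tensor_left_hom_comp_whiskerRight c c',
    fun X Y Z T => ?_⟩
  rw [mixedDouble_tensor_left_whiskerRight_eq_conj, mixedDouble_tensor_right_whiskerLeft_eq_conj,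
    mixedDouble_inv_whiskerLeft_eq_conj]
  simp only [Category.assoc, Iso.inv_hom_id_assoc, whisker_exchange_assoc]
end

section
/- Let D be a twine on a monoidal category C. Then D_{X,I} = id_X and D_{I,X} = id_X for all objects X. -/
open CategoryTheory MonoidalCategory

/-!
Naturality transports `D` along the unitors, and the triangle identity
`α_{X,I,Y} ≫ X ◁ λ_Y = ρ_X ▷ Y` then identifies `D_{X⊗I,Y}` with `D_{X,I⊗Y}` conjugated by the
associator. Substituting this into (DB1) at `(X, I, I)` and at `(I, I, X)`, and using (DB0),
leaves `D_{X,I} ▷ I = 𝟙` and `I ◁ D_{I,X} = 𝟙`; whiskering by the unit is faithful.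
-/

namespace CategoryTheory.MonoidalCategory

variable {C : Type*} [Category C] [MonoidalCategory C] (D : ∀ X Y : C, X ⊗ Y ≅ X ⊗ Y)
  (nat : ∀ {X X' Y Y' : C} (f : X ⟶ X') (g : Y ⟶ Y'),
    (f ⊗ₘ g) ≫ (D X' Y').hom = (D X Y).hom ≫ (f ⊗ₘ g))
include nat

theorem twine_hom_eq_whiskerRight_conj {X X' : C} (e : X ≅ X') (Y : C) :
    (D X Y).hom = e.hom ▷ Y ≫ (D X' Y).hom ≫ e.inv ▷ Y := by
  rw [← Category.assoc, ← tensorHom_id, nat, tensorHom_id, Category.assoc, ← comp_whiskerRight,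
    e.hom_inv_id, id_whiskerRight, Category.comp_id]

theorem twine_hom_eq_whiskerLeft_conj (X : C) {Y Y' : C} (e : Y ≅ Y') :
    (D X Y).hom = X ◁ e.hom ≫ (D X Y').hom ≫ X ◁ e.inv := by
  rw [← Category.assoc, ← id_tensorHom, nat, id_tensorHom, Category.assoc, ← whiskerLeft_comp,
    e.hom_inv_id, MonoidalCategory.whiskerLeft_id, Category.comp_id]

theorem associator_conj_twine_hom_unit (X Y : C) :
    (α_ X (𝟙_ C) Y).hom ≫ (D X (𝟙_ C ⊗ Y)).hom ≫ (α_ X (𝟙_ C) Y).inv =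
      (D (X ⊗ 𝟙_ C) Y).hom := by
  have triangle_inv : X ◁ (λ_ Y).inv ≫ (α_ X (𝟙_ C) Y).inv = (ρ_ X).inv ▷ Y := by
    rw [← cancel_mono ((ρ_ X).hom ▷ Y), ← triangle]
    simp
  rw [twine_hom_eq_whiskerLeft_conj D nat X (λ_ Y), twine_hom_eq_whiskerRight_conj D nat (ρ_ X) Y,
    ← triangle, ← triangle_inv]
  simp only [Category.assoc]

end CategoryTheory.MonoidalCategory

/-- If `D` is a twine on a monoidal category `C` (a natural
automorphism of the tensor product satisfying (DB0) and (DB1)), then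
`D_{X,I} = id_X` and `D_{I,X} = id_X` for all objects `X`
(as endomorphisms of `X ⊗ 𝟙_ C` and `𝟙_ C ⊗ X` in the non-strict setting). -/
theorem twine_unit {C : Type*} [Category C] [MonoidalCategory C]
    (D : ∀ X Y : C, X ⊗ Y ≅ X ⊗ Y)
    (nat : ∀ {X X' Y Y' : C} (f : X ⟶ X') (g : Y ⟶ Y'),
      (f ⊗ₘ g) ≫ (D X' Y').hom = (D X Y).hom ≫ (f ⊗ₘ g))
    (db0 : (D (𝟙_ C) (𝟙_ C)).hom = 𝟙 (𝟙_ C ⊗ 𝟙_ C))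
    (db1 : ∀ X Y Z : C,
      (D (X ⊗ Y) Z).hom ≫ ((D X Y).hom ⊗ₘ 𝟙 Z) =
        (α_ X Y Z).hom ≫ (D X (Y ⊗ Z)).hom ≫ (𝟙 X ⊗ₘ (D Y Z).hom) ≫ (α_ X Y Z).inv) :
    ∀ X : C, (D X (𝟙_ C)).hom = 𝟙 (X ⊗ 𝟙_ C) ∧ (D (𝟙_ C) X).hom = 𝟙 (𝟙_ C ⊗ X) := by
  intro X
  constructor
  · have h : (D (X ⊗ 𝟙_ C) (𝟙_ C)).hom ≫ (D X (𝟙_ C)).hom ▷ 𝟙_ C =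
        (D (X ⊗ 𝟙_ C) (𝟙_ C)).hom ≫ 𝟙 _ := by
      rw [Category.comp_id, ← tensorHom_id, db1, db0, id_tensorHom_id, Category.id_comp,
        associator_conj_twine_hom_unit D nat]
    rw [← whiskerRight_iff, id_whiskerRight]
    exact (cancel_epi _).1 h
  · have h : (α_ (𝟙_ C) (𝟙_ C) X).hom ≫ (D (𝟙_ C) (𝟙_ C ⊗ X)).hom ≫
          𝟙_ C ◁ (D (𝟙_ C) X).hom ≫ (α_ (𝟙_ C) (𝟙_ C) X).inv =
        (α_ (𝟙_ C) (𝟙_ C) X).hom ≫ (D (𝟙_ C) (𝟙_ C ⊗ X)).hom ≫ 𝟙 _ ≫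
          (α_ (𝟙_ C) (𝟙_ C) X).inv := by
      rw [← id_tensorHom, ← db1, db0, id_tensorHom_id, Category.comp_id, Category.id_comp,
        associator_conj_twine_hom_unit D nat]
    rw [← whiskerLeft_iff, MonoidalCategory.whiskerLeft_id]
    simpa only [Iso.cancel_iso_hom_left, cancel_mono] using h
end

section
/- Let C be a monoidal category and θ a natural automorphism of the identity functor with θ_I = id_I. Define D_{X,Y} = (θ_X^{-1} ⊗ θ_Y^{-1}) ∘ θ_{X⊗Y}. Then D automatically satisfies the fusion axiom (DB1): (D_{X,Y} ⊗ id_Z) ∘ D_{X⊗Y,Z} = (id_X ⊗ D_{Y,Z}) ∘ D_{X,Y⊗Z}. -/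
open CategoryTheory MonoidalCategory

/-! In both composites the inner twists cancel, leaving `θ_{XYZ}` followed by
`θ_X⁻¹ ⊗ θ_Y⁻¹ ⊗ θ_Z⁻¹`, bracketed in the two ways; the associator is natural in the tensor
factors, and `θ` is natural along the associator, so the two agree. -/

namespace CategoryTheory.MonoidalCategory

variable {C : Type*} [Category C] [MonoidalCategory C]

def inducedTwine (θ : ∀ X : C, X ≅ X) (X Y : C) : X ⊗ Y ⟶ X ⊗ Y :=
  (θ (X ⊗ Y)).hom ≫ ((θ X).inv ⊗ₘ (θ Y).inv)

variable (θ : ∀ X : C, X ≅ X) (X Y Z : C)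

theorem inducedTwine_tensor_comp_whiskerRight :
    inducedTwine θ (X ⊗ Y) Z ≫ inducedTwine θ X Y ▷ Z =
      (θ ((X ⊗ Y) ⊗ Z)).hom ≫ (((θ X).inv ⊗ₘ (θ Y).inv) ⊗ₘ (θ Z).inv) := by
  rw [inducedTwine, inducedTwine, Category.assoc, ← tensorHom_id, tensorHom_comp_tensorHom,
    Iso.inv_hom_id_assoc, Category.comp_id]

theorem inducedTwine_tensor_comp_whiskerLeft :
    inducedTwine θ X (Y ⊗ Z) ≫ X ◁ inducedTwine θ Y Z =
      (θ (X ⊗ Y ⊗ Z)).hom ≫ ((θ X).inv ⊗ₘ ((θ Y).inv ⊗ₘ (θ Z).inv)) := by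
  rw [inducedTwine, inducedTwine, Category.assoc, ← id_tensorHom, tensorHom_comp_tensorHom,
    Iso.inv_hom_id_assoc, Category.comp_id]

end CategoryTheory.MonoidalCategory

theorem twist_induced_twine_fusion_general {C : Type*} [Category C] [MonoidalCategory C]
    (θ : ∀ X : C, X ≅ X)
    (nat : ∀ {X Y : C} (f : X ⟶ Y), f ≫ (θ Y).hom = (θ X).hom ≫ f) :
    ∀ X Y Z : C,
      letI D : ∀ A B : C, A ⊗ B ⟶ A ⊗ B :=
        fun A B => (θ (A ⊗ B)).hom ≫ ((θ A).inv ⊗ₘ (θ B).inv)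
      D (X ⊗ Y) Z ≫ (D X Y ⊗ₘ 𝟙 Z) =
        (α_ X Y Z).hom ≫ D X (Y ⊗ Z) ≫ (𝟙 X ⊗ₘ D Y Z) ≫ (α_ X Y Z).inv := by
  intro X Y Z
  change inducedTwine θ (X ⊗ Y) Z ≫ (inducedTwine θ X Y ⊗ₘ 𝟙 Z) =
    (α_ X Y Z).hom ≫ inducedTwine θ X (Y ⊗ Z) ≫ (𝟙 X ⊗ₘ inducedTwine θ Y Z) ≫ (α_ X Y Z).inv
  rw [tensorHom_id, id_tensorHom, reassoc_of% inducedTwine_tensor_comp_whiskerLeft,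
    inducedTwine_tensor_comp_whiskerRight, associator_inv_naturality, ← reassoc_of% nat,
    Iso.hom_inv_id_assoc]

/-- Let `θ` be a natural automorphism of the identity functor
with `θ_I = id_I`, and set `D_{X,Y} = (θ_X⁻¹ ⊗ θ_Y⁻¹) ∘ θ_{X⊗Y}`.
Then `D` automatically satisfies the fusion axiom (DB1). -/
theorem twist_induced_twine_fusion {C : Type*} [Category C] [MonoidalCategory C]
    (θ : ∀ X : C, X ≅ X)
    (nat : ∀ {X Y : C} (f : X ⟶ Y), f ≫ (θ Y).hom = (θ X).hom ≫ f)
    (unit : (θ (𝟙_ C)).hom = 𝟙 (𝟙_ C)) :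
    ∀ X Y Z : C,
      letI D : ∀ A B : C, A ⊗ B ⟶ A ⊗ B :=
        fun A B => (θ (A ⊗ B)).hom ≫ ((θ A).inv ⊗ₘ (θ B).inv)
      D (X ⊗ Y) Z ≫ (D X Y ⊗ₘ 𝟙 Z) =
        (α_ X Y Z).hom ≫ D X (Y ⊗ Z) ≫ (𝟙 X ⊗ₘ D Y Z) ≫ (α_ X Y Z).inv :=
  twist_induced_twine_fusion_general θ nat
end

section
/- Let C be a braided monoidal category with twist θ satisfying θ_{X⊗Y} = (θ_X ⊗ θ_Y)∘c_{Y,X}∘c_{X,Y}, and suppose X has a right dual (Y, e, h). If θ_X and θ_Y are dual morphisms (i.e., θ_Y = θ_X* under the duality), then θ_X² = (e∘D_{X,Y}^{-1} ⊗ id_X)∘(id_X ⊗ h), where D_{X,Y} = c_{Y,X}∘c_{X,Y}. -/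
/-!
Naturality of `θ` at `e : X ⊗ Y ⟶ 𝟙`, with `θ_{X⊗Y} = (θ_X ⊗ θ_Y) ∘ D_{X,Y}` and `θ_𝟙 = 𝟙`, gives
`e ∘ D_{X,Y}⁻¹ = e ∘ (θ_X ⊗ θ_Y)`. Because `θ_Y = θ_X*`, the zigzag identity lets `θ_Y` slide
through `e` onto the `X`-strand, so `e ∘ (θ_X ⊗ θ_Y) = e ∘ (θ_X² ⊗ id_Y)`; bending the `Y`-strand
back with `h` and using the zigzag identity once more recovers `θ_X²`.
-/

open CategoryTheory MonoidalCategory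

namespace CategoryTheory.MonoidalCategory

variable {C : Type*} [Category C] [MonoidalCategory C]

theorem whiskerLeft_comp_rightUnitor_hom_comp {A B : C} (f : A ⟶ 𝟙_ C) (g : B ⟶ 𝟙_ C) :
    A ◁ g ≫ (ρ_ A).hom ≫ f = f ▷ B ≫ (λ_ B).hom ≫ g := by
  rw [← rightUnitor_naturality, ← leftUnitor_naturality, ← Category.assoc, whisker_exchange,
    Category.assoc, unitors_equal]

section Duality

variable {X Y : C} (e : X ⊗ Y ⟶ 𝟙_ C) (h : 𝟙_ C ⟶ Y ⊗ X)

/-- The first zigzag identity reads `snake h e = 𝟙 X`. -/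
def snake (φ : X ⊗ Y ⟶ 𝟙_ C) : X ⟶ X :=
  (ρ_ X).inv ≫ X ◁ h ≫ (α_ X Y X).inv ≫ φ ▷ X ≫ (λ_ X).hom

/-- The dual `f*` of `f` with respect to `(Y, e, h)`. -/
def transpose (f : X ⟶ X) : Y ⟶ Y :=
  (λ_ Y).inv ≫ h ▷ Y ≫ (Y ◁ f) ▷ Y ≫ (α_ Y X Y).hom ≫ Y ◁ e ≫ (ρ_ Y).hom

theorem snake_whiskerRight_comp (s : X ⟶ X) (φ : X ⊗ Y ⟶ 𝟙_ C) :
    snake h (s ▷ Y ≫ φ) = s ≫ snake h φ := by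
  simp only [snake, comp_whiskerRight, Category.assoc]
  slice_lhs 3 4 => rw [← associator_inv_naturality_left]
  slice_lhs 2 3 => rw [whisker_exchange]
  slice_lhs 1 2 => rw [← rightUnitor_inv_naturality]
  simp only [Category.assoc]

theorem whiskerLeft_transpose_comp (zigzag : snake h e = 𝟙 X) (f : X ⟶ X) :
    X ◁ transpose e h f ≫ e = f ▷ Y ≫ e := by
  calc X ◁ transpose e h f ≫ e
      = (((ρ_ X).inv ≫ X ◁ h ≫ (α_ X Y X).inv) ▷ Y ≫ (α_ (X ⊗ Y) X Y).hom) ≫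
          (X ⊗ Y) ◁ (f ▷ Y) ≫ (X ⊗ Y) ◁ e ≫ (ρ_ (X ⊗ Y)).hom ≫ e := by
        simp only [transpose]; monoidal
    _ = (((ρ_ X).inv ≫ X ◁ h ≫ (α_ X Y X).inv) ▷ Y ≫ (α_ (X ⊗ Y) X Y).hom) ≫
          e ▷ (X ⊗ Y) ≫ (λ_ (X ⊗ Y)).hom ≫ f ▷ Y ≫ e := by
        rw [whiskerLeft_comp_rightUnitor_hom_comp e e, whisker_exchange_assoc,
          leftUnitor_naturality_assoc]
    _ = snake h e ▷ Y ≫ f ▷ Y ≫ e := by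
        simp only [snake]; monoidal
    _ = f ▷ Y ≫ e := by
        rw [zigzag, id_whiskerRight, Category.id_comp]

end Duality

theorem braiding_inv_comp_braiding_inv_comp_of_balanced [BraidedCategory C]
    (θ : ∀ X : C, X ⟶ X) (nat : ∀ {X Y : C} (f : X ⟶ Y), f ≫ θ Y = θ X ≫ f)
    (balanced : ∀ X Y : C, θ (X ⊗ Y) = (β_ X Y).hom ≫ (β_ Y X).hom ≫ (θ X ⊗ₘ θ Y))
    (unit : θ (𝟙_ C) = 𝟙 (𝟙_ C)) {X Y : C} (e : X ⊗ Y ⟶ 𝟙_ C) :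
    (β_ Y X).inv ≫ (β_ X Y).inv ≫ e = (θ X ⊗ₘ θ Y) ≫ e := by
  have e_natural : e ≫ θ (𝟙_ C) = θ (X ⊗ Y) ≫ e := nat e
  rw [unit, Category.comp_id, balanced, Category.assoc, Category.assoc] at e_natural
  rw [Iso.inv_comp_eq, Iso.inv_comp_eq]
  exact e_natural

end CategoryTheory.MonoidalCategory

theorem twist_square_of_self_dual_general {C : Type*} [Category C] [MonoidalCategory C]
    [BraidedCategory C]
    (θ : ∀ X : C, X ≅ X)
    (nat : ∀ {X Y : C} (f : X ⟶ Y), f ≫ (θ Y).hom = (θ X).hom ≫ f)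
    (balanced : ∀ X Y : C,
      (θ (X ⊗ Y)).hom = (β_ X Y).hom ≫ (β_ Y X).hom ≫ ((θ X).hom ⊗ₘ (θ Y).hom))
    (unit : (θ (𝟙_ C)).hom = 𝟙 (𝟙_ C))
    (X Y : C) (e : X ⊗ Y ⟶ 𝟙_ C) (h : 𝟙_ C ⟶ Y ⊗ X)
    (zigzag₁ : (ρ_ X).inv ≫ (𝟙 X ⊗ₘ h) ≫ (α_ X Y X).inv ≫ (e ⊗ₘ 𝟙 X) ≫ (λ_ X).hom
      = 𝟙 X)
    (dual : (θ Y).hom =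
      (λ_ Y).inv ≫ (h ⊗ₘ 𝟙 Y) ≫ ((𝟙 Y ⊗ₘ (θ X).hom) ⊗ₘ 𝟙 Y) ≫ (α_ Y X Y).hom ≫
        (𝟙 Y ⊗ₘ e) ≫ (ρ_ Y).hom) :
    (θ X).hom ≫ (θ X).hom =
      (ρ_ X).inv ≫ (𝟙 X ⊗ₘ h) ≫ (α_ X Y X).inv ≫
        ((((β_ Y X).inv ≫ (β_ X Y).inv) ≫ e) ⊗ₘ 𝟙 X) ≫ (λ_ X).hom := by
  simp only [id_tensorHom, tensorHom_id] at zigzag₁ dual ⊢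
  change snake h e = 𝟙 X at zigzag₁
  change (θ Y).hom = transpose e h (θ X).hom at dual
  have twist_eval := braiding_inv_comp_braiding_inv_comp_of_balanced (fun X => (θ X).hom)
    nat balanced unit e
  calc (θ X).hom ≫ (θ X).hom = snake h (((θ X).hom ≫ (θ X).hom) ▷ Y ≫ e) := by
        rw [snake_whiskerRight_comp, zigzag₁, Category.comp_id]
    _ = snake h (((θ X).hom ⊗ₘ (θ Y).hom) ≫ e) := by
        rw [MonoidalCategory.tensorHom_def, Category.assoc, dual,
          whiskerLeft_transpose_comp e h zigzag₁, comp_whiskerRight_assoc]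
    _ = snake h (((β_ Y X).inv ≫ (β_ X Y).inv) ≫ e) := by
        rw [Category.assoc, twist_eval]

/-- Let `C` be a braided monoidal category with a balanced
structure `θ`, and let `(Y, e, h)` be a right dual of `X`. If `θ_X` and `θ_Y`
are dual morphisms (`θ_Y = (θ_X)*`), then
`θ_X ∘ θ_X = (e ∘ D_{X,Y}⁻¹ ⊗ id_X) ∘ (id_X ⊗ h)`, where
`D_{X,Y} = c_{Y,X} ∘ c_{X,Y}` is the double braiding (unitors and associators
inserted in the non-strict setting). -/
theorem twist_square_of_self_dual {C : Type*} [Category C] [MonoidalCategory C]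
    [BraidedCategory C]
    (θ : ∀ X : C, X ≅ X)
    (nat : ∀ {X Y : C} (f : X ⟶ Y), f ≫ (θ Y).hom = (θ X).hom ≫ f)
    (balanced : ∀ X Y : C,
      (θ (X ⊗ Y)).hom = (β_ X Y).hom ≫ (β_ Y X).hom ≫ ((θ X).hom ⊗ₘ (θ Y).hom))
    (unit : (θ (𝟙_ C)).hom = 𝟙 (𝟙_ C))
    (X Y : C) (e : X ⊗ Y ⟶ 𝟙_ C) (h : 𝟙_ C ⟶ Y ⊗ X)
    (zigzag₁ : (ρ_ X).inv ≫ (𝟙 X ⊗ₘ h) ≫ (α_ X Y X).inv ≫ (e ⊗ₘ 𝟙 X) ≫ (λ_ X).hom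
      = 𝟙 X)
    (zigzag₂ : (λ_ Y).inv ≫ (h ⊗ₘ 𝟙 Y) ≫ (α_ Y X Y).hom ≫ (𝟙 Y ⊗ₘ e) ≫ (ρ_ Y).hom
      = 𝟙 Y)
    (dual : (θ Y).hom =
      (λ_ Y).inv ≫ (h ⊗ₘ 𝟙 Y) ≫ ((𝟙 Y ⊗ₘ (θ X).hom) ⊗ₘ 𝟙 Y) ≫ (α_ Y X Y).hom ≫
        (𝟙 Y ⊗ₘ e) ≫ (ρ_ Y).hom) :
    (θ X).hom ≫ (θ X).hom =
      (ρ_ X).inv ≫ (𝟙 X ⊗ₘ h) ≫ (α_ X Y X).inv ≫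
        ((((β_ Y X).inv ≫ (β_ X Y).inv) ≫ e) ⊗ₘ 𝟙 X) ≫ (λ_ X).hom :=
  twist_square_of_self_dual_general θ nat balanced unit X Y e h zigzag₁ dual
end
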